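/- arXiv:2411.19854 — 3 statements merged into one kernel-verified Lean document; each statement's English description precedes it below -/
import Mathlib

section
/- For the SSS model with α ≥ 2, the unconstrained objective Δ*(ρ) = C₀ · ((ρ^α+ρ)/(1+ρ))^{1/α} · (2 + 1/ρ + 1/(ρ(1+ρ))) attains a critical point at ρ = 1, where its derivative vanishes. -/
/-!
At `ρ = 1` the load `N̄_SSS(ρ) = (ρ^α + ρ)/(1 + ρ)` equals `1` and has slope `α/2`, so
`N̄_SSS^(1/α)` has logarithmic derivative `1/2`; the age factor `2 + 1/ρ + 1/(ρ(1+ρ))` equals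
`7/2` and has slope `-7/4`, i.e. logarithmic derivative `-1/2`. The two cancel in the product.
-/

noncomputable section

namespace SSS

def load (α ρ : ℝ) : ℝ := (ρ ^ α + ρ) / (1 + ρ)

def ageFactor (ρ : ℝ) : ℝ := 2 + 1 / ρ + 1 / (ρ * (1 + ρ))

theorem hasDerivAt_load (α : ℝ) {ρ : ℝ} (hρ : ρ ≠ 0) (hρ' : 1 + ρ ≠ 0) :
    HasDerivAt (load α)
      (((α * ρ ^ (α - 1) + 1) * (1 + ρ) - (ρ ^ α + ρ)) / (1 + ρ) ^ 2) ρ := by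
  have hnum : HasDerivAt (fun x : ℝ => x ^ α + x) (α * ρ ^ (α - 1) + 1) ρ :=
    (Real.hasDerivAt_rpow_const (Or.inl hρ)).add (hasDerivAt_id ρ)
  exact (hnum.div ((hasDerivAt_id' ρ).const_add 1) hρ').congr_deriv (by ring)

theorem hasDerivAt_ageFactor {ρ : ℝ} (hρ : ρ ≠ 0) (hρ' : 1 + ρ ≠ 0) :
    HasDerivAt ageFactor (-(ρ ^ 2)⁻¹ - (1 + 2 * ρ) / (ρ * (1 + ρ)) ^ 2) ρ := by
  have hprod : HasDerivAt (fun x : ℝ => x * (1 + x)) (1 + 2 * ρ) ρ :=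
    ((hasDerivAt_id' ρ).mul ((hasDerivAt_id' ρ).const_add 1)).congr_deriv (by ring)
  have h := ((hasDerivAt_inv hρ).const_add 2).add (hprod.inv (mul_ne_zero hρ hρ'))
  simp only [← one_div] at h
  exact h.congr_deriv (by ring)

theorem load_one (α : ℝ) : load α 1 = 1 := by
  norm_num [load]

theorem hasDerivAt_load_one (α : ℝ) : HasDerivAt (load α) (α / 2) 1 := by
  convert hasDerivAt_load α one_ne_zero (by norm_num) using 1
  norm_num; ring

theorem hasDerivAt_load_rpow_inv_one {α : ℝ} (hα : α ≠ 0) :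
    HasDerivAt (fun ρ => load α ρ ^ (1 / α)) (1 / 2) 1 := by
  convert (hasDerivAt_load_one α).rpow_const (p := 1 / α) (Or.inl (by rw [load_one]; norm_num))
    using 1
  rw [load_one, Real.one_rpow]
  field_simp

theorem ageFactor_one : ageFactor 1 = 7 / 2 := by
  norm_num [ageFactor]

theorem hasDerivAt_ageFactor_one : HasDerivAt ageFactor (-(7 / 4)) 1 := by
  convert hasDerivAt_ageFactor one_ne_zero (by norm_num) using 1
  norm_num

end SSS

end

theorem sss_critical_at_one_general (C₀ α : ℝ) (hα : 2 ≤ α) :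
    deriv (fun ρ : ℝ =>
        C₀ * ((ρ ^ α + ρ) / (1 + ρ)) ^ (1/α) * (2 + 1/ρ + 1/(ρ * (1 + ρ)))) 1 = 0 := by
  have hobj := ((SSS.hasDerivAt_load_rpow_inv_one (by linarith : α ≠ 0)).const_mul C₀).mul
    SSS.hasDerivAt_ageFactor_one
  refine hobj.deriv.trans ?_
  rw [SSS.load_one, SSS.ageFactor_one, Real.one_rpow]
  ring

/-- For the SSS model with α ≥ 2, the unconstrained objective has a critical
point at ρ = 1: its derivative vanishes there. -/
theorem sss_critical_at_one (C₀ α : ℝ) (hC₀ : 0 < C₀) (hα : 2 ≤ α) :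
    deriv (fun ρ : ℝ =>
        C₀ * ((ρ ^ α + ρ) / (1 + ρ)) ^ (1/α) * (2 + 1/ρ + 1/(ρ * (1 + ρ)))) 1 = 0 :=
  sss_critical_at_one_general C₀ α hα
end

section
/- For the P-SIU model with any α ≥ 2, the unconstrained objective Δ*(ρ) = C₀ · (2(ρ^α+ρ)/(1+ρ))^{1/α} · (1 + (1/(2ρ))(1 + 1/(1+ρ))) has a critical point at ρ = 1. -/
/-!
Logarithmic differentiation: the objective is `C₀ · g^{1/α} · h` with
`g ρ = 2(ρ^α + ρ)/(1 + ρ)` and `h ρ = 1 + (1/(2ρ))(1 + 1/(1 + ρ))`.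
At `ρ = 1` one has `g = 2`, `g' = α`, `h = 7/4`, `h' = -7/8`, so
`(1/α) · g'/g + h'/h = 1/2 - 1/2 = 0`; the exponent `α` cancels.
-/

open Real

namespace PSIU

/-- The factor `2(ρ^α + ρ)/(1 + ρ)` whose `α`-th root, times `C₀`, is `1/μ₂*`. -/
noncomputable def powerFactor (α ρ : ℝ) : ℝ := 2 * (ρ ^ α + ρ) / (1 + ρ)

/-- The factor `Δ_{P-SIU}(μ₂, ρ) · μ₂`. -/
noncomputable def ageFactor (ρ : ℝ) : ℝ := 1 + (1 / (2 * ρ)) * (1 + 1 / (1 + ρ))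

lemma powerFactor_one (α : ℝ) : powerFactor α 1 = 2 := by
  norm_num [powerFactor]

lemma hasDerivAt_powerFactor_one (α : ℝ) : HasDerivAt (powerFactor α) α 1 := by
  have hnum : HasDerivAt (fun ρ : ℝ => 2 * (ρ ^ α + ρ)) (2 * (α * 1 ^ (α - 1) + 1)) 1 :=
    ((hasDerivAt_rpow_const (Or.inl one_ne_zero)).add (hasDerivAt_id 1)).const_mul 2
  have hden : HasDerivAt (fun ρ : ℝ => 1 + ρ) 1 1 := (hasDerivAt_id 1).const_add 1
  refine (hnum.fun_div hden (by norm_num)).congr_deriv ?_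
  simp only [one_rpow]
  ring

lemma hasDerivAt_powerFactor_rpow_inv_one {α : ℝ} (hα : α ≠ 0) :
    HasDerivAt (fun ρ => powerFactor α ρ ^ (1 / α)) (2 ^ (1 / α) / 2) 1 := by
  refine ((hasDerivAt_powerFactor_one α).rpow_const
    (p := 1 / α) (Or.inl (by rw [powerFactor_one]; norm_num))).congr_deriv ?_
  rw [powerFactor_one, rpow_sub two_pos, rpow_one]
  field_simp

lemma ageFactor_one : ageFactor 1 = 7 / 4 := by
  norm_num [ageFactor]

lemma hasDerivAt_ageFactor_one : HasDerivAt ageFactor (-7 / 8) 1 := by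
  have hinv : HasDerivAt (fun ρ : ℝ => 1 / (2 * ρ)) (-1 / 2) 1 :=
    ((hasDerivAt_const (1 : ℝ) (1 : ℝ)).fun_div ((hasDerivAt_id' 1).const_mul 2)
      (by norm_num)).congr_deriv (by norm_num)
  have hshift : HasDerivAt (fun ρ : ℝ => 1 + 1 / (1 + ρ)) (-1 / 4) 1 :=
    (((hasDerivAt_const (1 : ℝ) (1 : ℝ)).fun_div ((hasDerivAt_id' 1).const_add 1)
      (by norm_num)).const_add 1).congr_deriv (by norm_num)
  exact ((hinv.fun_mul hshift).const_add 1).congr_deriv (by norm_num)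

end PSIU

open PSIU in
theorem psiu_critical_at_one_general (C₀ α : ℝ) (hα : 2 ≤ α) :
    deriv (fun ρ : ℝ =>
        C₀ * (2 * (ρ ^ α + ρ) / (1 + ρ)) ^ (1/α)
          * (1 + (1 / (2*ρ)) * (1 + 1/(1 + ρ)))) 1 = 0 := by
  have hα0 : α ≠ 0 := by positivity
  have hprod := ((hasDerivAt_powerFactor_rpow_inv_one hα0).const_mul C₀).fun_mul
    hasDerivAt_ageFactor_one
  change deriv (fun ρ => C₀ * powerFactor α ρ ^ (1 / α) * ageFactor ρ) 1 = 0
  rw [hprod.deriv, powerFactor_one, ageFactor_one]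
  ring

/-- For the P-SIU model with α ≥ 2, the unconstrained objective has a
critical point at ρ = 1. -/
theorem psiu_critical_at_one (C₀ α : ℝ) (hC₀ : 0 < C₀) (hα : 2 ≤ α) :
    deriv (fun ρ : ℝ =>
        C₀ * (2 * (ρ ^ α + ρ) / (1 + ρ)) ^ (1/α)
          * (1 + (1 / (2*ρ)) * (1 + 1/(1 + ρ)))) 1 = 0 :=
  psiu_critical_at_one_general C₀ α hα
end

section
/- For all μ₂ > 0 and ρ > 0, the M/M/1/2* age (1/μ₂)[2/ρ + 2ρ²/(1+ρ+ρ²) + (1+2ρ)(1+3ρ+ρ²)/(1+ρ)⁴] is strictly greater than the M/M/1* age (1/μ₂)(1 + 1/ρ). -/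
/-!
Already the first two summands of the M/M/1/2* age exceed the M/M/1* age:
`2/ρ + 2ρ²/(1+ρ+ρ²) - (1 + 1/ρ) = (1+ρ³)/(ρ(1+ρ+ρ²))`, and the remaining summand is positive.
-/

lemma one_add_add_sq_pos (ρ : ℝ) : 0 < 1 + ρ + ρ ^ 2 := by
  nlinarith [sq_nonneg (ρ + 1 / 2)]

lemma two_div_add_two_sq_div_eq (ρ : ℝ) (hρ : ρ ≠ 0) :
    2 / ρ + 2 * ρ ^ 2 / (1 + ρ + ρ ^ 2) = 1 + 1 / ρ + (1 + ρ ^ 3) / (ρ * (1 + ρ + ρ ^ 2)) := by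
  have := (one_add_add_sq_pos ρ).ne'
  field_simp
  ring

/-- The M/M/1/2* age strictly exceeds the M/M/1* age. -/
theorem mm12star_age_gt_mm1star (μ₂ ρ : ℝ) (hμ₂ : 0 < μ₂) (hρ : 0 < ρ) :
    (1 / μ₂) * (2/ρ + 2*ρ^2/(1 + ρ + ρ^2)
        + (1 + 2*ρ) * (1 + 3*ρ + ρ^2) / (1 + ρ)^4)
      > (1 / μ₂) * (1 + 1/ρ) := by
  refine mul_lt_mul_of_pos_left ?_ (by positivity)
  rw [two_div_add_two_sq_div_eq ρ hρ.ne']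
  have hgap : 0 < (1 + ρ ^ 3) / (ρ * (1 + ρ + ρ ^ 2)) := by positivity
  have htail : 0 < (1 + 2 * ρ) * (1 + 3 * ρ + ρ ^ 2) / (1 + ρ) ^ 4 := by positivity
  linarith
end
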